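/- Let X = Fin T → Fin N → EuclideanSpace ℝ (Fin 3) and C = Fin Tc → Fin N → EuclideanSpace ℝ (Fin 3). Let r : C → X be SE(3)-equivariant, i.e., r (g • c) = g • r c for every rigid motion g, and let ε : X → C → X be rotation-equivariant and translation-invariant, i.e., ε (g • x) (g • c) = fun τ i => R.mulVec (ε x c τ i) for every rigid motion g = (R, t). Then for all real constants a, b, the denoising mean map μ(x, c) := r c + a • ((x - r c) - b • ε x c) is SE(3)-equivariant: μ (g • x) (g • c) = g • μ (x, c) for every rigid motion g and all x, c (here the vector space operations on X are pointwise). -/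
import Mathlib


/-- The action of a rigid motion `(R, t)`: `(g • x) τ i = R.mulVec (x τ i) + t`. -/
noncomputable def rigidAct {T N : ℕ} (R : Matrix (Fin 3) (Fin 3) ℝ)
    (t : EuclideanSpace ℝ (Fin 3))
    (x : Fin T → Fin N → EuclideanSpace ℝ (Fin 3)) :
    Fin T → Fin N → EuclideanSpace ℝ (Fin 3) :=
  fun τ i => (EuclideanSpace.equiv (Fin 3) ℝ).symm (R.mulVec (x τ i)) + t

/-- If the anchor `r : C → X` is SE(3)-equivariant and the denoising network
`ε : X → C → X` is rotation-equivariant and translation-invariant, then for all real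
constants `a, b` the denoising mean map `μ (x, c) = r c + a • ((x - r c) - b • ε x c)`
is SE(3)-equivariant. -/
theorem stmt13 (T Tc N : ℕ)
    (r : (Fin Tc → Fin N → EuclideanSpace ℝ (Fin 3)) →
      (Fin T → Fin N → EuclideanSpace ℝ (Fin 3)))
    (hr : ∀ R ∈ Matrix.specialOrthogonalGroup (Fin 3) ℝ,
      ∀ t : EuclideanSpace ℝ (Fin 3), ∀ c,
        r (rigidAct R t c) = rigidAct R t (r c))
    (ε : (Fin T → Fin N → EuclideanSpace ℝ (Fin 3)) →
      (Fin Tc → Fin N → EuclideanSpace ℝ (Fin 3)) →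
      (Fin T → Fin N → EuclideanSpace ℝ (Fin 3)))
    (hε : ∀ R ∈ Matrix.specialOrthogonalGroup (Fin 3) ℝ,
      ∀ t : EuclideanSpace ℝ (Fin 3), ∀ x c,
        ε (rigidAct R t x) (rigidAct R t c)
          = fun τ i => (EuclideanSpace.equiv (Fin 3) ℝ).symm (R.mulVec (ε x c τ i)))
    (a b : ℝ) :
    ∀ R ∈ Matrix.specialOrthogonalGroup (Fin 3) ℝ,
      ∀ t : EuclideanSpace ℝ (Fin 3), ∀ x c,
        r (rigidAct R t c)
            + a • ((rigidAct R t x - r (rigidAct R t c))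
              - b • ε (rigidAct R t x) (rigidAct R t c))
          = rigidAct R t (r c + a • ((x - r c) - b • ε x c)) := by
  intro R hR t x c
  rw [hr R hR, hε R hR]
  funext τ i
  show _ = _
  simp only [rigidAct, Pi.add_apply, Pi.sub_apply, Pi.smul_apply]
  ext j
  simp [Matrix.mulVec, dotProduct, Fin.sum_univ_three]
  ring
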